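/- The limit as z → 0⁺ of (log(Arccosh(1 + z)) − (log z)/2 − (log 2)/2)/z equals −1/12. -/

import Mathlib

/-!
Substitute `1 + z = cosh (2 s)`, i.e. `s = arcosh (1 + z) / 2 → 0⁺` and `z = 2 sinh² s`. The
quantity then becomes `-log (sinh s / s) / (2 sinh² s)`. Writing `x = sinh s / s → 1`, we have
`log x ~ x - 1 = (sinh s - s) / s ~ s² / 6` and `2 sinh² s ~ 2 s²`, whence the limit `-1/12`.
-/

open Real Filter

/-- Inverse hyperbolic cosine: `Arccosh w = log (w + √(w² − 1))` for `w ≥ 1`. -/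
noncomputable def arccosh (w : ℝ) : ℝ := Real.log (w + Real.sqrt (w ^ 2 - 1))

open Topology

theorem arccosh_eq_arcosh : arccosh = arcosh := rfl

theorem sinh_ne_self {x : ℝ} (hx : x ≠ 0) : sinh x ≠ x :=
  fun h => hx (sinh_sub_id_strictMono.injective (by simp [h]))

theorem tendsto_arcosh_one_add_nhdsGT :
    Tendsto (fun z => arcosh (1 + z)) (𝓝[>] 0) (𝓝[>] 0) := by
  refine tendsto_nhdsWithin_iff.2 ⟨?_, ?_⟩
  · have hmaps : Tendsto (fun z : ℝ => 1 + z) (𝓝[>] 0) (𝓝[Set.Ici 1] 1) := by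
      refine tendsto_nhdsWithin_iff.2 ⟨?_, ?_⟩
      · exact ((continuous_const_add (1 : ℝ)).tendsto' 0 1 (add_zero 1)).mono_left
          nhdsWithin_le_nhds
      · filter_upwards [self_mem_nhdsWithin] with z (hz : 0 < z)
        simpa using hz.le
    have h := (continuousOn_arcosh 1 Set.self_mem_Ici).tendsto.comp hmaps
    rwa [arcosh_zero] at h
  · filter_upwards [self_mem_nhdsWithin] with z hz
    exact arcosh_pos (lt_add_of_pos_right 1 hz)

theorem tendsto_sinh_div_self : Tendsto (fun s => sinh s / s) (𝓝[≠] 0) (𝓝 1) := by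
  simpa [slope_def_field, div_eq_inv_mul] using (hasDerivAt_sinh 0).tendsto_slope_zero

theorem tendsto_log_div_sub_one : Tendsto (fun x => log x / (x - 1)) (𝓝[≠] 1) (𝓝 1) := by
  simpa [slope_fun_def_field] using (hasDerivAt_log one_ne_zero).tendsto_slope

theorem tendsto_sinh_sub_self_div_pow_three :
    Tendsto (fun s => (sinh s - s) / s ^ 3) (𝓝[≠] 0) (𝓝 (1 / 6)) := by
  have vanish {f : ℝ → ℝ} (hf : Continuous f) (h0 : f 0 = 0) : Tendsto f (𝓝[≠] 0) (𝓝 0) :=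
    (hf.tendsto' 0 0 h0).mono_left nhdsWithin_le_nhds
  have hcosh : Tendsto (fun s => (cosh s - 1) / (3 * s ^ 2)) (𝓝[≠] 0) (𝓝 (1 / 6)) := by
    refine HasDerivAt.lhopital_zero_nhdsNE (f' := sinh) (g' := fun s => 6 * s)
      (.of_forall fun s => (hasDerivAt_cosh s).sub_const 1)
      (.of_forall fun s => ?_) ?_ (vanish (by fun_prop) (by simp))
      (vanish (by fun_prop) (by simp)) ?_
    · exact ((hasDerivAt_pow 2 s).const_mul 3).congr_deriv (by push_cast; ring)
    · filter_upwards [self_mem_nhdsWithin] with s hs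
      simpa using hs
    · refine (tendsto_sinh_div_self.div_const 6).congr fun s => ?_
      rw [div_div, mul_comm]
  refine HasDerivAt.lhopital_zero_nhdsNE (f' := fun s => cosh s - 1) (g' := fun s => 3 * s ^ 2)
    (.of_forall fun s => (hasDerivAt_sinh s).sub (hasDerivAt_id s))
    (.of_forall fun s => by simpa using hasDerivAt_pow 3 s) ?_ (vanish (by fun_prop) (by simp))
    (vanish (by fun_prop) (by simp)) hcosh
  filter_upwards [self_mem_nhdsWithin] with s hs
  simpa using hs

theorem tendsto_log_sinh_div_self_div_sq :
    Tendsto (fun s => log (sinh s / s) / s ^ 2) (𝓝[≠] 0) (𝓝 (1 / 6)) := by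
  have hratio : Tendsto (fun s => sinh s / s) (𝓝[≠] 0) (𝓝[≠] 1) := by
    refine tendsto_nhdsWithin_iff.2 ⟨tendsto_sinh_div_self, ?_⟩
    filter_upwards [self_mem_nhdsWithin] with s (hs : s ≠ 0)
    rw [Set.mem_compl_singleton_iff, Ne, div_eq_one_iff_eq hs]
    exact sinh_ne_self hs
  have h := (tendsto_log_div_sub_one.comp hratio).mul tendsto_sinh_sub_self_div_pow_three
  rw [one_mul] at h
  refine h.congr' ?_
  filter_upwards [self_mem_nhdsWithin] with s (hs : s ≠ 0)
  have hd : sinh s - s ≠ 0 := sub_ne_zero.2 (sinh_ne_self hs)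
  simp only [Function.comp_apply]
  field_simp

theorem tendsto_log_sinh_div_self_div_two_mul_sinh_sq :
    Tendsto (fun s => log (sinh s / s) / (2 * sinh s ^ 2)) (𝓝[≠] 0) (𝓝 (1 / 12)) := by
  have h := (tendsto_log_sinh_div_self_div_sq.mul
    ((tendsto_sinh_div_self.inv₀ one_ne_zero).pow 2)).div_const 2
  rw [show (1 / 6 : ℝ) * 1⁻¹ ^ 2 / 2 = 1 / 12 by norm_num] at h
  refine h.congr' ?_
  filter_upwards [self_mem_nhdsWithin] with s (hs : s ≠ 0)
  have : sinh s ≠ 0 := sinh_ne_zero.2 hs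
  field_simp

theorem stmt_16 :
    Tendsto
      (fun z : ℝ =>
        (Real.log (arccosh (1 + z)) - Real.log z / 2 - Real.log 2 / 2) / z)
      (nhdsWithin 0 (Set.Ioi 0)) (nhds (-1 / 12)) := by
  obtain ⟨hlim, hpos⟩ := tendsto_nhdsWithin_iff.1 tendsto_arcosh_one_add_nhdsGT
  have hhalf : Tendsto (fun z => arcosh (1 + z) / 2) (𝓝[>] 0) (𝓝[≠] 0) :=
    tendsto_nhdsWithin_iff.2 ⟨by simpa using hlim.div_const 2,
      hpos.mono fun z hz => (half_pos hz).ne'⟩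
  have h := (tendsto_log_sinh_div_self_div_two_mul_sinh_sq.comp hhalf).neg
  rw [← neg_div] at h
  refine h.congr' ?_
  filter_upwards [self_mem_nhdsWithin, hpos] with z (hz : 0 < z) ht
  simp only [Function.comp_apply]
  set s := arcosh (1 + z) / 2
  have hs : s ≠ 0 := (half_pos ht).ne'
  have hsinh : sinh s ≠ 0 := sinh_ne_zero.2 hs
  have harcosh : arcosh (1 + z) = 2 * s := by ring
  have hz : z = 2 * sinh s ^ 2 := by
    have := cosh_arcosh (by linarith : (1 : ℝ) ≤ 1 + z)
    rw [harcosh, cosh_two_mul, cosh_sq'] at this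
    linarith
  rw [arccosh_eq_arcosh, harcosh, hz, log_mul two_ne_zero hs,
    log_mul two_ne_zero (pow_ne_zero 2 hsinh), log_pow, log_div hsinh hs]
  ring
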